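/- arXiv:2210.02510 — 2 statements merged into one kernel-verified Lean document; each statement's English description precedes it below -/
import Mathlib

section
/- Let η : Ω → ℝ be a C¹ function with η(x₁,0) = 0 for all x₁ and with ∂₂η square integrable. Then for all R ∈ (0,1), ∫_{Ω_R} η² ≤ 16 R⁴ ∫_{Ω_R} |∂₂η|², where Ω_R = {(x₁,x₂) ∈ Ω : -1 < x₁ < -1+R}. -/
/-!
On each vertical slice `{x₁} × (-f x₁, f x₁)` the function `η` vanishes at `x₂ = 0`, so the
fundamental theorem of calculus and Cauchy–Schwarz give `η(x₁, x₂)² ≤ |x₂| ∫ |∂₂η|²` along the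
slice; integrating in `x₂` yields the one-dimensional Poincaré inequality
`∫ η² ≤ (f x₁)² ∫ |∂₂η|²`. Near the cusp `f x₁ ≤ 4R²`, and Fubini over the region between the
graphs of `-f` and `f` sums the slice estimates.
-/

open Set MeasureTheory

theorem sq_integral_le_measureReal_mul_integral_sq {α : Type*} [MeasurableSpace α]
    {μ : Measure α} [IsFiniteMeasure μ] {h : α → ℝ} (hi : Integrable h μ)
    (hi2 : Integrable (fun x => h x ^ 2) μ) :
    (∫ x, h x ∂μ) ^ 2 ≤ μ.real univ * ∫ x, h x ^ 2 ∂μ := by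
  rcases eq_zero_or_neZero μ with rfl | hμ
  · simp
  have hm : 0 < μ.real univ := by
    simp [measureReal_def, ENNReal.toReal_pos_iff, measure_lt_top, pos_iff_ne_zero, hμ.out]
  have jensen : (⨍ x, h x ∂μ) ^ 2 ≤ ⨍ x, h x ^ 2 ∂μ :=
    (even_two.convexOn_pow (𝕜 := ℝ)).map_average_le
      (continuous_pow 2).continuousOn isClosed_univ (by simp) hi hi2
  rw [average_eq, average_eq, smul_eq_mul, smul_eq_mul] at jensen
  field_simp at jensen
  linarith

theorem sq_sub_le_abs_mul_integral_deriv_sq {g : ℝ → ℝ} {U : Set ℝ} (hg : ContDiffOn ℝ 1 g U)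
    (hU : IsOpen U) {a b : ℝ} (hab : uIcc a b ⊆ U) :
    (g b - g a) ^ 2 ≤ |b - a| * ∫ t in uIoc a b, deriv g t ^ 2 := by
  have hd : ∀ t ∈ uIcc a b, HasDerivAt g (deriv g t) t := fun t ht =>
    ((hg.differentiableOn one_ne_zero t (hab ht)).differentiableAt
      (hU.mem_nhds (hab ht))).hasDerivAt
  have hc : ContinuousOn (deriv g) (uIcc a b) :=
    (hg.continuousOn_deriv_of_isOpen hU le_rfl).mono hab
  rw [← intervalIntegral.integral_eq_sub_of_hasDerivAt hd hc.intervalIntegrable, ← sq_abs,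
    intervalIntegral.abs_integral_eq_abs_integral_uIoc, sq_abs]
  have : IsFiniteMeasure (volume.restrict (uIoc a b)) :=
    isFiniteMeasure_restrict.2 (by simp [Real.volume_uIoc])
  have := sq_integral_le_measureReal_mul_integral_sq (μ := volume.restrict (uIoc a b))
    (hc.integrableOn_uIcc.mono_set uIoc_subset_uIcc)
    ((hc.pow 2).integrableOn_uIcc.mono_set uIoc_subset_uIcc)
  simpa [measureReal_def, Real.volume_uIoc] using this

theorem integral_abs_Ioo_neg_self {a : ℝ} (ha : 0 ≤ a) : ∫ y in Ioo (-a) a, |y| = a ^ 2 := by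
  have half : ∫ y in (0 : ℝ)..a, |y| = a ^ 2 / 2 := by
    rw [intervalIntegral.integral_congr (g := fun y => y) fun y hy => abs_of_nonneg ?_,
      integral_id]
    · ring
    · rw [uIcc_of_le ha] at hy; exact hy.1
  rw [← integral_Ioc_eq_integral_Ioo, ← intervalIntegral.integral_of_le (by linarith),
    ← intervalIntegral.integral_add_adjacent_intervals (b := 0)
      (continuous_abs.intervalIntegrable _ _) (continuous_abs.intervalIntegrable _ _)]
  have := intervalIntegral.integral_comp_neg (a := 0) (b := a) (fun y => |y|)
  simp only [abs_neg, neg_zero] at this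
  rw [← this, half]
  ring

theorem regionBetween_inter_preimage_fst {α : Type*} (u v : α → ℝ) (s t : Set α) :
    regionBetween u v s ∩ Prod.fst ⁻¹' t = regionBetween u v (s ∩ t) := by
  ext p
  simp only [regionBetween, mem_inter_iff, mem_preimage, mem_ofPred_eq]
  tauto

theorem indicator_regionBetween_slice {α : Type*} {u v : α → ℝ} {s : Set α} {G : α × ℝ → ℝ}
    {x : α} (hx : x ∈ s) :
    (fun y => (regionBetween u v s).indicator G (x, y))
      = (Ioo (u x) (v x)).indicator (fun y => G (x, y)) := by
  ext y
  by_cases hy : y ∈ Ioo (u x) (v x)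
  · rw [indicator_of_mem hy, indicator_of_mem (show (x, y) ∈ regionBetween u v s from ⟨hx, hy⟩)]
  · rw [indicator_of_notMem hy, indicator_of_notMem fun h => hy h.2]

theorem integral_indicator_regionBetween_slice {α : Type*} (u v : α → ℝ) (s : Set α)
    (G : α × ℝ → ℝ) (x : α) :
    ∫ y, (regionBetween u v s).indicator G (x, y)
      = s.indicator (fun x => ∫ y in Ioo (u x) (v x), G (x, y)) x := by
  by_cases hx : x ∈ s
  · rw [indicator_of_mem hx, ← integral_indicator measurableSet_Ioo,
      ← indicator_regionBetween_slice hx]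
  · have hxy (y : ℝ) : (x, y) ∉ regionBetween u v s := fun h => hx h.1
    simp only [indicator_of_notMem hx, indicator_of_notMem (hxy _), integral_zero]

namespace MeasureTheory.IntegrableOn

variable {α : Type*} [MeasurableSpace α] {μ : Measure α} {u v : α → ℝ} {s : Set α}
  {G : α × ℝ → ℝ}

theorem setIntegral_regionBetween [SFinite μ]
    (hG : IntegrableOn G (regionBetween u v s) (μ.prod volume))
    (hu : Measurable u) (hv : Measurable v) (hs : MeasurableSet s) :
    ∫ p in regionBetween u v s, G p ∂μ.prod volume
      = ∫ x in s, (∫ y in Ioo (u x) (v x), G (x, y)) ∂μ := by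
  rw [← integral_indicator (measurableSet_regionBetween hu hv hs),
    integral_prod _ (hG.integrable_indicator (measurableSet_regionBetween hu hv hs)),
    ← integral_indicator hs]
  simp_rw [integral_indicator_regionBetween_slice]

theorem integrableOn_integral_regionBetween
    (hG : IntegrableOn G (regionBetween u v s) (μ.prod volume))
    (hu : Measurable u) (hv : Measurable v) (hs : MeasurableSet s) :
    IntegrableOn (fun x => ∫ y in Ioo (u x) (v x), G (x, y)) s μ := by
  rw [← integrable_indicator_iff hs]
  simpa only [integral_indicator_regionBetween_slice] using
    (hG.integrable_indicator (measurableSet_regionBetween hu hv hs)).integral_prod_left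

theorem ae_integrableOn_slice_regionBetween [SFinite μ]
    (hG : IntegrableOn G (regionBetween u v s) (μ.prod volume))
    (hu : Measurable u) (hv : Measurable v) (hs : MeasurableSet s) :
    ∀ᵐ x ∂μ.restrict s, IntegrableOn (fun y => G (x, y)) (Ioo (u x) (v x)) := by
  filter_upwards [ae_restrict_of_ae
      (hG.integrable_indicator (measurableSet_regionBetween hu hv hs)).prod_right_ae,
    ae_restrict_mem hs] with x hx hxs
  rwa [indicator_regionBetween_slice hxs, integrable_indicator_iff measurableSet_Ioo] at hx

theorem setIntegral_regionBetween_le_mul_of_slice [SFinite μ] {F : α × ℝ → ℝ} (C : ℝ)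
    (hF : IntegrableOn F (regionBetween u v s) (μ.prod volume))
    (hG : IntegrableOn G (regionBetween u v s) (μ.prod volume))
    (hu : Measurable u) (hv : Measurable v) (hs : MeasurableSet s)
    (hslice : ∀ x ∈ s, IntegrableOn (fun y => G (x, y)) (Ioo (u x) (v x)) →
      ∫ y in Ioo (u x) (v x), F (x, y) ≤ C * ∫ y in Ioo (u x) (v x), G (x, y)) :
    ∫ p in regionBetween u v s, F p ∂μ.prod volume
      ≤ C * ∫ p in regionBetween u v s, G p ∂μ.prod volume := by
  rw [hF.setIntegral_regionBetween hu hv hs, hG.setIntegral_regionBetween hu hv hs,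
    ← integral_const_mul]
  refine integral_mono_ae (hF.integrableOn_integral_regionBetween hu hv hs)
    ((hG.integrableOn_integral_regionBetween hu hv hs).const_mul C) ?_
  filter_upwards [hG.ae_integrableOn_slice_regionBetween hu hv hs, ae_restrict_mem hs]
    with x hGx hx using hslice x hx hGx

end MeasureTheory.IntegrableOn

theorem integral_sq_le_sq_mul_integral_deriv_sq {g : ℝ → ℝ} {a : ℝ}
    (hg : ContDiffOn ℝ 1 g (Ioo (-a) a)) (h0 : g 0 = 0)
    (hg' : IntegrableOn (fun y => deriv g y ^ 2) (Ioo (-a) a)) :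
    ∫ y in Ioo (-a) a, g y ^ 2 ≤ a ^ 2 * ∫ y in Ioo (-a) a, deriv g y ^ 2 := by
  rcases lt_or_ge a 0 with ha | ha
  · simp [Ioo_eq_empty (by linarith : ¬-a < a)]
  set J := ∫ y in Ioo (-a) a, deriv g y ^ 2
  have pointwise : ∀ y ∈ Ioo (-a) a, g y ^ 2 ≤ |y| * J := by
    intro y hy
    have hsub : uIcc 0 y ⊆ Ioo (-a) a :=
      ordConnected_Ioo.uIcc_subset ⟨by linarith [hy.1, hy.2], by linarith [hy.1, hy.2]⟩ hy
    calc g y ^ 2 = (g y - g 0) ^ 2 := by rw [h0, sub_zero]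
      _ ≤ |y - 0| * ∫ t in uIoc 0 y, deriv g t ^ 2 :=
        sq_sub_le_abs_mul_integral_deriv_sq hg isOpen_Ioo hsub
      _ ≤ |y| * J := by
        rw [sub_zero]
        gcongr
        exact setIntegral_mono_set hg' (.of_forall fun _ => sq_nonneg _)
          (uIoc_subset_uIcc.trans hsub).eventuallyLE
  calc ∫ y in Ioo (-a) a, g y ^ 2 ≤ ∫ y in Ioo (-a) a, |y| * J :=
        setIntegral_mono_of_nonneg (fun _ _ => sq_nonneg _) pointwise
          ((continuous_abs.mul continuous_const).integrableOn_Icc.mono_set Ioo_subset_Icc_self)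
    _ = a ^ 2 * J := by rw [integral_mul_const, integral_abs_Ioo_neg_self ha]

theorem sq_cusp_profile_le {x R : ℝ} (hx : x ∈ Ioo (-1) (-1 + R)) (hR : R ≤ 1) :
    ((x - 1) ^ 2 * (x + 1) ^ 2) ^ 2 ≤ 16 * R ^ 4 := by
  obtain ⟨h1, hR'⟩ := hx
  have : (x - 1) ^ 2 * (x + 1) ^ 2 ≤ 4 * R ^ 2 := by
    nlinarith [sq_nonneg (x - 1), sq_nonneg (x + 1), mul_pos (by linarith : (0:ℝ) < 3 - x)
      (by linarith : (0:ℝ) < x + 1), mul_pos (by linarith : (0:ℝ) < R - (x + 1))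
      (by linarith : (0:ℝ) < x + 1)]
  nlinarith [mul_nonneg (sq_nonneg (x - 1)) (sq_nonneg (x + 1))]

/-- If η is C¹ on the cusp domain Ω, vanishes on {x₂ = 0}, and ∂₂η is
square integrable, then for all R ∈ (0,1),
∫_{Ω_R} η² ≤ 16 R⁴ ∫_{Ω_R} |∂₂η|², where Ω_R = {(x₁,x₂) ∈ Ω : -1 < x₁ < -1+R}. -/
theorem stmt2 (f : ℝ → ℝ) (hf : ∀ t, f t = (t - 1) ^ 2 * (t + 1) ^ 2)
    (Ω : Set (ℝ × ℝ))
    (hΩ : Ω = {p : ℝ × ℝ | -1 < p.1 ∧ p.1 < 1 ∧ -f p.1 < p.2 ∧ p.2 < f p.1})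
    (η : ℝ × ℝ → ℝ) (hη : ContDiffOn ℝ 1 η Ω)
    (h0 : ∀ x₁ ∈ Ioo (-1 : ℝ) 1, η (x₁, 0) = 0)
    (hint : IntegrableOn (fun p => (deriv (fun s => η (p.1, s)) p.2) ^ 2) Ω)
    (hint' : IntegrableOn (fun p => (η p) ^ 2) Ω) :
    ∀ R ∈ Ioo (0 : ℝ) 1,
      ∫ p in Ω ∩ {q : ℝ × ℝ | q.1 < -1 + R}, (η p) ^ 2 ≤
        16 * R ^ 4 * ∫ p in Ω ∩ {q : ℝ × ℝ | q.1 < -1 + R},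
          (deriv (fun s => η (p.1, s)) p.2) ^ 2 := by
  rintro R ⟨-, hR1⟩
  have hfc : Continuous f := by rw [funext hf]; fun_prop
  have hΩR : Ω ∩ {q : ℝ × ℝ | q.1 < -1 + R} = regionBetween (-f) f (Ioo (-1) (-1 + R)) := by
    have hΩ' : Ω = regionBetween (-f) f (Ioo (-1) 1) := by
      rw [hΩ]; ext; simp [regionBetween, and_assoc]
    have hI : Ioo (-1 : ℝ) (-1 + R) = Ioo (-1) 1 ∩ Iio (-1 + R) := by
      rw [Ioo_inter_Iio, min_eq_right (by linarith)]
    rw [hΩ', hI, ← regionBetween_inter_preimage_fst]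
    rfl
  have hsub : regionBetween (-f) f (Ioo (-1) (-1 + R)) ⊆ Ω := hΩR ▸ inter_subset_left
  rw [hΩR, Measure.volume_eq_prod]
  refine (hint'.mono_set hsub).setIntegral_regionBetween_le_mul_of_slice _ (hint.mono_set hsub)
    hfc.measurable.neg hfc.measurable measurableSet_Ioo fun x hx hslice => ?_
  have hη_slice : ContDiffOn ℝ 1 (fun s => η (x, s)) (Ioo (-f x) (f x)) :=
    hη.comp (contDiffOn_const.prodMk contDiffOn_id) fun y hy => hsub ⟨hx, hy⟩
  calc ∫ y in Ioo (-f x) (f x), η (x, y) ^ 2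
      ≤ f x ^ 2 * ∫ y in Ioo (-f x) (f x), deriv (fun s => η (x, s)) y ^ 2 :=
        integral_sq_le_sq_mul_integral_deriv_sq hη_slice (h0 x ⟨hx.1, by linarith [hx.2]⟩) hslice
    _ ≤ 16 * R ^ 4 * ∫ y in Ioo (-f x) (f x), deriv (fun s => η (x, s)) y ^ 2 := by
        gcongr
        exact hf x ▸ sq_cusp_profile_le hx hR1.le
end

section
/- Let φ ∈ H¹(Ω) be a Neumann eigenfunction on the cusp domain Ω with eigenvalue μ² > 0 (i.e., ∫_Ω ∇φ·∇w = μ²∫_Ω φw for all w ∈ H¹(Ω)), and let σ(x) = √((x₁+1)² + x₂²). Assume σ^{-γ-1}φ ∈ L²(Ω) and σ^{-γ}φ ∈ L²(Ω) for some γ ≥ 0. Then σ^{-γ}∇φ ∈ L²(Ω), with the estimate (1/2)∫_Ω |∇φ|²σ^{-2γ} ≤ 2γ²∫_Ω φ²σ^{-2γ-2} + μ²∫_Ω φ²σ^{-2γ}. -/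
/-!
Test the eigenvalue identity with `w = φ (σ² + δ)⁻ᵞ`, a smooth bounded regularization of
`φ σ⁻²ᵞ`. By the product rule, `∇φ·∇w = |∇φ|² (σ² + δ)⁻ᵞ - 2γ φ (σ² + δ)⁻ᵞ⁻¹ ∇φ·(x - x₀)`
with `x₀ = (-1, 0)`. Since `|x - x₀|² ≤ σ² + δ`, Young's inequality absorbs the cross term into
half of the first one at the price of `2γ² φ² (σ² + δ)⁻ᵞ⁻¹ ≤ 2γ² φ² σ⁻²ᵞ⁻²`. This bounds
`½ ∫ |∇φ|² (σ² + δ)⁻ᵞ` uniformly in `δ`, and monotone convergence as `δ ↓ 0` concludes.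
-/

open Set MeasureTheory

/-- Gradient of a function of two real variables. -/
noncomputable def grad2 (u : ℝ × ℝ → ℝ) (x : ℝ × ℝ) : ℝ × ℝ :=
  (fderiv ℝ u x (1, 0), fderiv ℝ u x (0, 1))

/-- Euclidean dot product on ℝ². -/
def dot2 (p q : ℝ × ℝ) : ℝ := p.1 * q.1 + p.2 * q.2

/-- The weight σ(x₁,x₂) = √((x₁+1)² + x₂²). -/
noncomputable def sig2 (p : ℝ × ℝ) : ℝ := Real.sqrt ((p.1 + 1) ^ 2 + p.2 ^ 2)

open Filter Topology

-- No boundary condition is imposed on the test functions `w`: this is the weak Neumann problem.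
def IsNeumannEigenfunction (ν : Measure (ℝ × ℝ)) (φ : ℝ × ℝ → ℝ) (κ : ℝ) : Prop :=
  ∀ w : ℝ × ℝ → ℝ, Differentiable ℝ w → MemLp w 2 ν → MemLp (grad2 w) 2 ν →
    ∫ p, dot2 (grad2 φ p) (grad2 w p) ∂ν = κ * ∫ p, φ p * w p ∂ν

theorem integrable_and_integral_le_of_monotone_of_tendsto {α : Type*} [MeasurableSpace α]
    {ν : Measure α} {f : ℕ → α → ℝ} {F : α → ℝ} {C : ℝ}
    (hf : ∀ n, Integrable (f n) ν) (hf0 : ∀ n, 0 ≤ᵐ[ν] f n)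
    (h_mono : ∀ᵐ x ∂ν, Monotone fun n => f n x)
    (h_tendsto : ∀ᵐ x ∂ν, Tendsto (fun n => f n x) atTop (𝓝 (F x)))
    (hC : ∀ n, ∫ x, f n x ∂ν ≤ C) :
    Integrable F ν ∧ ∫ x, F x ∂ν ≤ C := by
  have hF0 : 0 ≤ᵐ[ν] F := by
    filter_upwards [h_tendsto, hf0 0, h_mono] with x hx h0 hm
    exact ge_of_tendsto' hx fun n => h0.trans (hm n.zero_le)
  have hlin : ∫⁻ x, ENNReal.ofReal (F x) ∂ν ≤ ENNReal.ofReal C := by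
    refine le_of_tendsto (lintegral_tendsto_of_tendsto_of_monotone
      (fun n => (hf n).aemeasurable.ennreal_ofReal) ?_ ?_) (Eventually.of_forall fun n => ?_)
    · filter_upwards [h_mono] with x hx n m hnm using ENNReal.ofReal_le_ofReal (hx hnm)
    · filter_upwards [h_tendsto] with x hx using (ENNReal.continuous_ofReal.tendsto _).comp hx
    · rw [← ofReal_integral_eq_lintegral_ofReal (hf n) (hf0 n)]
      exact ENNReal.ofReal_le_ofReal (hC n)
  have hF : Integrable F ν :=
    ⟨aestronglyMeasurable_of_tendsto_ae atTop (fun n => (hf n).1) h_tendsto,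
      (hasFiniteIntegral_iff_ofReal hF0).2 (hlin.trans_lt ENNReal.ofReal_lt_top)⟩
  exact ⟨hF, le_of_tendsto (integral_tendsto_of_tendsto_of_monotone hf hF h_mono h_tendsto)
    (Eventually.of_forall hC)⟩

lemma integrable_dot2 {α : Type*} [MeasurableSpace α] {ν : Measure α} {u v : α → ℝ × ℝ}
    (hu : MemLp u 2 ν) (hv : MemLp v 2 ν) : Integrable (fun x => dot2 (u x) (v x)) ν :=
  (hu.fst.integrable_mul hv.fst).add (hu.snd.integrable_mul hv.snd)

lemma two_mul_dot2_le (G c : ℝ × ℝ) (s : ℝ) :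
    2 * s * dot2 G c ≤ 2 * s ^ 2 + dot2 G G * dot2 c c / 2 := by
  have cauchy_schwarz : dot2 G c ^ 2 ≤ dot2 G G * dot2 c c := by
    simp only [dot2]; nlinarith [sq_nonneg (G.1 * c.2 - G.2 * c.1)]
  nlinarith [sq_nonneg (2 * s - dot2 G c)]

-- With `a = φ p`, `G = ∇φ p`, `c = p - (-1, 0)` and `t = σ² + δ`, the `dot2` term is `∇φ · ∇w`.
lemma half_dot2_mul_rpow_le (G c : ℝ × ℝ) {a γ t : ℝ} (ht : 0 < t) (hc : dot2 c c ≤ t) :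
    1 / 2 * (dot2 G G * t ^ (-γ)) ≤
      dot2 G (a • ((-(2 * γ) * t ^ (-γ - 1)) • c) + t ^ (-γ) • G) +
        2 * γ ^ 2 * (a ^ 2 * t ^ (-γ - 1)) := by
  have hsplit : t ^ (-γ) = t ^ (-γ - 1) * t := by
    rw [Real.rpow_sub_one ht.ne']; field_simp
  have hGG : 0 ≤ dot2 G G := add_nonneg (mul_self_nonneg _) (mul_self_nonneg _)
  have hexpand : dot2 G (a • ((-(2 * γ) * t ^ (-γ - 1)) • c) + t ^ (-γ) • G) =
      t ^ (-γ - 1) * (dot2 G G * t - 2 * (γ * a) * dot2 G c) := by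
    simp only [dot2, hsplit, Prod.fst_add, Prod.snd_add, Prod.smul_fst, Prod.smul_snd, smul_eq_mul]
    ring
  have h0 : 0 ≤ t ^ (-γ - 1) := by positivity
  rw [hexpand, hsplit]
  nlinarith [mul_le_mul_of_nonneg_left (two_mul_dot2_le G c (γ * a)) h0,
    mul_le_mul_of_nonneg_left (mul_le_mul_of_nonneg_left hc hGG) h0]

lemma grad2_mul {u v : ℝ × ℝ → ℝ} {p : ℝ × ℝ} (hu : DifferentiableAt ℝ u p)
    (hv : DifferentiableAt ℝ v p) :
    grad2 (fun q => u q * v q) p = u p • grad2 v p + v p • grad2 u p := by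
  simp [grad2, fderiv_fun_mul hu hv]

lemma grad2_comp {h : ℝ → ℝ} {h' : ℝ} {u : ℝ × ℝ → ℝ} {p : ℝ × ℝ}
    (hh : HasDerivAt h h' (u p)) (hu : DifferentiableAt ℝ u p) :
    grad2 (fun q => h (u q)) p = h' • grad2 u p := by
  change grad2 (h ∘ u) p = _
  simp [grad2, (hh.comp_hasFDerivAt p hu.hasFDerivAt).fderiv]

lemma sig2_sq (p : ℝ × ℝ) : sig2 p ^ 2 = (p.1 + 1) ^ 2 + p.2 ^ 2 :=
  Real.sq_sqrt (by positivity)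

lemma dot2_sig2 (p : ℝ × ℝ) : dot2 (p.1 + 1, p.2) (p.1 + 1, p.2) = sig2 p ^ 2 := by
  simp only [dot2, sig2_sq]; ring

lemma differentiable_sig2_sq_add (δ : ℝ) : Differentiable ℝ fun p => sig2 p ^ 2 + δ := by
  simp only [sig2_sq]; fun_prop

lemma grad2_sig2_sq_add (δ : ℝ) (p : ℝ × ℝ) :
    grad2 (fun q => sig2 q ^ 2 + δ) p = (2 : ℝ) • (p.1 + 1, p.2) := by
  have h : HasFDerivAt (fun q : ℝ × ℝ => (q.1 + 1) ^ 2 + q.2 ^ 2 + δ) _ p :=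
    ((((hasFDerivAt_fst (p := p) (𝕜 := ℝ)).add_const 1).pow 2).add
      (hasFDerivAt_snd.pow 2)).add_const δ
  simp [sig2_sq, grad2, h.fderiv]
  ring

section Regularized

variable {δ : ℝ}

lemma grad2_rpow_sig2_sq_add (hδ : 0 < δ) (γ : ℝ) (p : ℝ × ℝ) :
    grad2 (fun q => (sig2 q ^ 2 + δ) ^ (-γ)) p =
      (-(2 * γ) * (sig2 p ^ 2 + δ) ^ (-γ - 1)) • (p.1 + 1, p.2) := by
  have ht : 0 < sig2 p ^ 2 + δ := by positivity
  rw [grad2_comp (Real.hasDerivAt_rpow_const (Or.inl ht.ne')) (differentiable_sig2_sq_add δ p),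
    grad2_sig2_sq_add, smul_smul]
  ring_nf

lemma rpow_sig2_sq_add_le (hδ : 0 < δ) {e : ℝ} (he : e ≤ 0) (p : ℝ × ℝ) :
    (sig2 p ^ 2 + δ) ^ e ≤ δ ^ e :=
  Real.rpow_le_rpow_of_nonpos hδ (le_add_of_nonneg_left (sq_nonneg _)) he

lemma rpow_sig2_sq_add_le_sig2_rpow (hδ : 0 ≤ δ) {e : ℝ} (he : e ≤ 0) {p : ℝ × ℝ}
    (hp : 0 < sig2 p) : (sig2 p ^ 2 + δ) ^ e ≤ sig2 p ^ (2 * e) := by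
  rw [Real.rpow_mul hp.le, Real.rpow_two]
  exact Real.rpow_le_rpow_of_nonpos (by positivity) (le_add_of_nonneg_right hδ) he

lemma norm_grad2_rpow_sig2_sq_add_le (hδ : 0 < δ) {γ : ℝ} (hγ : 0 ≤ γ) (p : ℝ × ℝ) :
    ‖grad2 (fun q => (sig2 q ^ 2 + δ) ^ (-γ)) p‖ ≤ 2 * γ * (δ ^ (-γ - 1) + δ ^ (-γ)) := by
  set t := sig2 p ^ 2 + δ
  have ht : 0 < t := by positivity
  -- `|x| ≤ 1 + x²`, so the linear growth of `(p.1 + 1, p.2)` is absorbed by `t ^ (-γ - 1)`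
  have hc : ‖((p.1 + 1, p.2) : ℝ × ℝ)‖ ≤ 1 + t := by
    have h2 := sig2_sq p
    rw [Prod.norm_def, Real.norm_eq_abs, Real.norm_eq_abs]
    refine max_le ?_ ?_ <;> rw [abs_le] <;> constructor <;>
      nlinarith [sq_nonneg (p.1 + 1 + 1), sq_nonneg (p.1 + 1 - 1), sq_nonneg (p.2 + 1),
        sq_nonneg (p.2 - 1), sq_nonneg p.2, sq_nonneg (p.1 + 1)]
  have hsplit : t ^ (-γ - 1) * (1 + t) = t ^ (-γ - 1) + t ^ (-γ) := by
    rw [Real.rpow_sub_one ht.ne']; field_simp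
  rw [grad2_rpow_sig2_sq_add hδ, norm_smul, Real.norm_eq_abs, abs_mul, abs_neg,
    abs_of_nonneg (by positivity : 0 ≤ 2 * γ), abs_of_nonneg (by positivity : 0 ≤ t ^ (-γ - 1)),
    mul_assoc]
  gcongr
  calc t ^ (-γ - 1) * ‖((p.1 + 1, p.2) : ℝ × ℝ)‖ ≤ t ^ (-γ - 1) * (1 + t) := by gcongr
    _ ≤ δ ^ (-γ - 1) + δ ^ (-γ) := by
      rw [hsplit]
      exact add_le_add (rpow_sig2_sq_add_le hδ (by linarith) p)
        (rpow_sig2_sq_add_le hδ (by linarith) p)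

variable {ν : Measure (ℝ × ℝ)} {φ : ℝ × ℝ → ℝ} {γ : ℝ}

lemma continuous_rpow_sig2_sq_add (hδ : 0 < δ) (e : ℝ) :
    Continuous fun q => (sig2 q ^ 2 + δ) ^ e :=
  (differentiable_sig2_sq_add δ).continuous.rpow_const fun q => Or.inl (by positivity)

lemma memLp_mul_rpow_sig2_sq_add (hδ : 0 < δ) (hγ : 0 ≤ γ) (hφ : MemLp φ 2 ν) :
    MemLp (fun q => φ q * (sig2 q ^ 2 + δ) ^ (-γ)) 2 ν := by
  refine hφ.of_le_mul (c := δ ^ (-γ))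
    (hφ.1.mul (continuous_rpow_sig2_sq_add hδ _).aestronglyMeasurable) (ae_of_all _ fun q => ?_)
  rw [norm_mul, mul_comm, Real.norm_of_nonneg (by positivity)]
  exact mul_le_mul_of_nonneg_right (rpow_sig2_sq_add_le hδ (by linarith) q) (norm_nonneg _)

lemma memLp_top_rpow_sig2_sq_add (hδ : 0 < δ) (hγ : 0 ≤ γ) :
    MemLp (fun q => (sig2 q ^ 2 + δ) ^ (-γ)) ⊤ ν :=
  memLp_top_of_bound (continuous_rpow_sig2_sq_add hδ _).aestronglyMeasurable (δ ^ (-γ))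
    (ae_of_all _ fun q => by
      rw [Real.norm_of_nonneg (by positivity)]
      exact rpow_sig2_sq_add_le hδ (by linarith) q)

lemma memLp_grad2_mul_rpow_sig2_sq_add (hδ : 0 < δ) (hγ : 0 ≤ γ) (hφd : Differentiable ℝ φ)
    (hφ : MemLp φ 2 ν) (hφg : MemLp (grad2 φ) 2 ν) :
    MemLp (grad2 fun q => φ q * (sig2 q ^ 2 + δ) ^ (-γ)) 2 ν := by
  have hwd : Differentiable ℝ fun q => (sig2 q ^ 2 + δ) ^ (-γ) :=
    (differentiable_sig2_sq_add δ).rpow_const fun q => Or.inl (by positivity)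
  have hwg : MemLp (grad2 fun q => (sig2 q ^ 2 + δ) ^ (-γ)) ⊤ ν :=
    memLp_top_of_bound ((measurable_fderiv_apply_const ℝ _ _).prodMk
      (measurable_fderiv_apply_const ℝ _ _)).aestronglyMeasurable _
      (ae_of_all _ (norm_grad2_rpow_sig2_sq_add_le hδ hγ))
  have hgrad : (grad2 fun q => φ q * (sig2 q ^ 2 + δ) ^ (-γ)) =
      (fun q => φ q • grad2 (fun q => (sig2 q ^ 2 + δ) ^ (-γ)) q) +
        fun q => (sig2 q ^ 2 + δ) ^ (-γ) • grad2 φ q :=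
    funext fun q => grad2_mul (hφd q) (hwd q)
  rw [hgrad]
  exact (hwg.smul hφ).add (hφg.smul (memLp_top_rpow_sig2_sq_add hδ hγ))

lemma integrable_and_integral_sq_mul_rpow_sig2_sq_add_le (hδ : 0 < δ) {e : ℝ} (he : e ≤ 0)
    (hpos : ∀ᵐ p ∂ν, 0 < sig2 p) (hφ : AEStronglyMeasurable φ ν)
    (h : Integrable (fun p => φ p ^ 2 * sig2 p ^ (2 * e)) ν) :
    Integrable (fun p => φ p ^ 2 * (sig2 p ^ 2 + δ) ^ e) ν ∧
      ∫ p, φ p ^ 2 * (sig2 p ^ 2 + δ) ^ e ∂ν ≤ ∫ p, φ p ^ 2 * sig2 p ^ (2 * e) ∂ν := by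
  have hle : ∀ᵐ p ∂ν, φ p ^ 2 * (sig2 p ^ 2 + δ) ^ e ≤ φ p ^ 2 * sig2 p ^ (2 * e) := by
    filter_upwards [hpos] with p hp
    exact mul_le_mul_of_nonneg_left (rpow_sig2_sq_add_le_sig2_rpow hδ.le he hp) (sq_nonneg _)
  have hint : Integrable (fun p => φ p ^ 2 * (sig2 p ^ 2 + δ) ^ e) ν := by
    refine h.mono' ((hφ.pow 2).mul (continuous_rpow_sig2_sq_add hδ e).aestronglyMeasurable) ?_
    filter_upwards [hle] with p hp
    rwa [Real.norm_of_nonneg (by positivity)]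
  exact ⟨hint, integral_mono_ae hint h hle⟩

theorem half_integral_dot2_grad2_mul_rpow_sig2_sq_add_le {κ : ℝ} (hκ : 0 ≤ κ) (hγ : 0 ≤ γ)
    (hδ : 0 < δ) (hpos : ∀ᵐ p ∂ν, 0 < sig2 p)
    (hφd : Differentiable ℝ φ) (hφ : MemLp φ 2 ν) (hφg : MemLp (grad2 φ) 2 ν)
    (heig : IsNeumannEigenfunction ν φ κ)
    (h1 : Integrable (fun p => φ p ^ 2 * sig2 p ^ (-(2 * γ) - 2)) ν)
    (h2 : Integrable (fun p => φ p ^ 2 * sig2 p ^ (-(2 * γ))) ν) :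
    Integrable (fun p => dot2 (grad2 φ p) (grad2 φ p) * (sig2 p ^ 2 + δ) ^ (-γ)) ν ∧
      1 / 2 * ∫ p, dot2 (grad2 φ p) (grad2 φ p) * (sig2 p ^ 2 + δ) ^ (-γ) ∂ν ≤
        2 * γ ^ 2 * ∫ p, φ p ^ 2 * sig2 p ^ (-(2 * γ) - 2) ∂ν +
          κ * ∫ p, φ p ^ 2 * sig2 p ^ (-(2 * γ)) ∂ν := by
  set w := fun q => φ q * (sig2 q ^ 2 + δ) ^ (-γ)
  have hwd : Differentiable ℝ fun q => (sig2 q ^ 2 + δ) ^ (-γ) :=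
    (differentiable_sig2_sq_add δ).rpow_const fun q => Or.inl (by positivity)
  have hwg := memLp_grad2_mul_rpow_sig2_sq_add hδ hγ hφd hφ hφg
  have hid := heig w (hφd.mul hwd) (memLp_mul_rpow_sig2_sq_add hδ hγ hφ) hwg
  rw [show (fun p => φ p * w p) = fun p => φ p ^ 2 * (sig2 p ^ 2 + δ) ^ (-γ) by ext; ring] at hid
  rw [show -(2 * γ) - 2 = 2 * (-γ - 1) by ring] at h1 ⊢
  rw [show -(2 * γ) = 2 * -γ by ring] at h2 ⊢
  obtain ⟨hI1, hφ1⟩ :=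
    integrable_and_integral_sq_mul_rpow_sig2_sq_add_le hδ (by linarith) hpos hφ.1 h1
  obtain ⟨-, hφ2⟩ := integrable_and_integral_sq_mul_rpow_sig2_sq_add_le hδ (by linarith) hpos hφ.1 h2
  have hI0 : Integrable (fun p => dot2 (grad2 φ p) (grad2 φ p) * (sig2 p ^ 2 + δ) ^ (-γ)) ν :=
    (integrable_dot2 hφg hφg).mul_of_top_left (memLp_top_rpow_sig2_sq_add hδ hγ)
  have hIw : Integrable (fun p => dot2 (grad2 φ p) (grad2 w p)) ν := integrable_dot2 hφg hwg
  refine ⟨hI0, ?_⟩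
  calc 1 / 2 * ∫ p, dot2 (grad2 φ p) (grad2 φ p) * (sig2 p ^ 2 + δ) ^ (-γ) ∂ν
      = ∫ p, 1 / 2 * (dot2 (grad2 φ p) (grad2 φ p) * (sig2 p ^ 2 + δ) ^ (-γ)) ∂ν :=
        (integral_const_mul _ _).symm
    _ ≤ ∫ p, (dot2 (grad2 φ p) (grad2 w p) +
          2 * γ ^ 2 * (φ p ^ 2 * (sig2 p ^ 2 + δ) ^ (-γ - 1))) ∂ν := by
        refine integral_mono (hI0.const_mul _) (hIw.add (hI1.const_mul _)) fun p => ?_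
        rw [grad2_mul (hφd p) (hwd p), grad2_rpow_sig2_sq_add hδ]
        exact half_dot2_mul_rpow_le _ _ (by positivity) (by rw [dot2_sig2]; linarith)
    _ = 2 * γ ^ 2 * ∫ p, φ p ^ 2 * (sig2 p ^ 2 + δ) ^ (-γ - 1) ∂ν +
          κ * ∫ p, φ p ^ 2 * (sig2 p ^ 2 + δ) ^ (-γ) ∂ν := by
        rw [integral_add hIw (hI1.const_mul _), integral_const_mul, hid, add_comm]
    _ ≤ _ := by gcongr

lemma tendsto_rpow_sig2_sq_add_one_div {p : ℝ × ℝ} (hp : 0 < sig2 p) (γ : ℝ) :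
    Tendsto (fun n : ℕ => (sig2 p ^ 2 + 1 / (n + 1)) ^ (-γ)) atTop
      (𝓝 (sig2 p ^ (-(2 * γ)))) := by
  have hlim := ((Real.continuousAt_rpow_const _ (-γ) (Or.inl (by positivity))).tendsto.comp
    ((tendsto_const_nhds (x := sig2 p ^ 2)).add tendsto_one_div_add_atTop_nhds_zero_nat))
  have hval : (sig2 p ^ 2) ^ (-γ) = sig2 p ^ (-(2 * γ)) := by
    rw [← Real.rpow_two, ← Real.rpow_mul hp.le, mul_neg]
  rw [add_zero, hval] at hlim
  exact hlim

theorem integrable_and_half_integral_dot2_grad2_mul_sig2_rpow_le {κ : ℝ} (hκ : 0 ≤ κ)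
    (hγ : 0 ≤ γ) (hpos : ∀ᵐ p ∂ν, 0 < sig2 p)
    (hφd : Differentiable ℝ φ) (hφ : MemLp φ 2 ν) (hφg : MemLp (grad2 φ) 2 ν)
    (heig : IsNeumannEigenfunction ν φ κ)
    (h1 : Integrable (fun p => φ p ^ 2 * sig2 p ^ (-(2 * γ) - 2)) ν)
    (h2 : Integrable (fun p => φ p ^ 2 * sig2 p ^ (-(2 * γ))) ν) :
    Integrable (fun p => dot2 (grad2 φ p) (grad2 φ p) * sig2 p ^ (-(2 * γ))) ν ∧
      1 / 2 * ∫ p, dot2 (grad2 φ p) (grad2 φ p) * sig2 p ^ (-(2 * γ)) ∂ν ≤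
        2 * γ ^ 2 * ∫ p, φ p ^ 2 * sig2 p ^ (-(2 * γ) - 2) ∂ν +
          κ * ∫ p, φ p ^ 2 * sig2 p ^ (-(2 * γ)) ∂ν := by
  have hreg (n : ℕ) := half_integral_dot2_grad2_mul_rpow_sig2_sq_add_le (δ := 1 / (n + 1))
    hκ hγ (by positivity) hpos hφd hφ hφg heig h1 h2
  have hGG (p : ℝ × ℝ) : 0 ≤ dot2 (grad2 φ p) (grad2 φ p) :=
    add_nonneg (mul_self_nonneg _) (mul_self_nonneg _)
  set C := 2 * γ ^ 2 * ∫ p, φ p ^ 2 * sig2 p ^ (-(2 * γ) - 2) ∂ν +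
    κ * ∫ p, φ p ^ 2 * sig2 p ^ (-(2 * γ)) ∂ν
  obtain ⟨hint, hle⟩ := integrable_and_integral_le_of_monotone_of_tendsto (C := 2 * C)
    (f := fun (n : ℕ) p => dot2 (grad2 φ p) (grad2 φ p) * (sig2 p ^ 2 + 1 / (n + 1)) ^ (-γ))
    (fun n => (hreg n).1) (fun n => ae_of_all _ fun p => mul_nonneg (hGG p) (by positivity))
    (ae_of_all _ fun p n m hnm => mul_le_mul_of_nonneg_left (Real.rpow_le_rpow_of_nonpos
      (by positivity) (by gcongr) (by linarith)) (hGG p))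
    (by filter_upwards [hpos] with p hp
        exact (tendsto_rpow_sig2_sq_add_one_div hp γ).const_mul _)
    (fun n => by linarith [(hreg n).2])
  exact ⟨hint, by linarith⟩

end Regularized

lemma ae_sig2_pos : ∀ᵐ p ∂(volume : Measure (ℝ × ℝ)), 0 < sig2 p := by
  filter_upwards [(Set.countable_singleton ((-1 : ℝ), (0 : ℝ))).ae_notMem volume] with p hp
  refine Real.sqrt_pos.2 (lt_of_le_of_ne (by positivity) fun h => hp ?_)
  have h1 : p.1 + 1 = 0 := by nlinarith [sq_nonneg (p.1 + 1), sq_nonneg p.2]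
  have h2 : p.2 = 0 := by nlinarith [sq_nonneg (p.1 + 1), sq_nonneg p.2]
  exact Prod.ext (by linarith) h2

theorem stmt14_general
    (Ω : Set (ℝ × ℝ))
    (μ γ : ℝ) (hγ : 0 ≤ γ)
    (φ : ℝ × ℝ → ℝ) (hφd : Differentiable ℝ φ)
    (hφL2 : MemLp φ 2 (volume.restrict Ω))
    (hφgL2 : MemLp (grad2 φ) 2 (volume.restrict Ω))
    (heig : ∀ w : ℝ × ℝ → ℝ, Differentiable ℝ w →
      MemLp w 2 (volume.restrict Ω) → MemLp (grad2 w) 2 (volume.restrict Ω) →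
      ∫ p in Ω, dot2 (grad2 φ p) (grad2 w p) = μ ^ 2 * ∫ p in Ω, φ p * w p)
    (h1 : IntegrableOn (fun p => (φ p) ^ 2 * (sig2 p) ^ (-(2 * γ) - 2)) Ω)
    (h2 : IntegrableOn (fun p => (φ p) ^ 2 * (sig2 p) ^ (-(2 * γ))) Ω) :
    IntegrableOn (fun p => dot2 (grad2 φ p) (grad2 φ p) * (sig2 p) ^ (-(2 * γ))) Ω ∧
    (1 / 2) * ∫ p in Ω, dot2 (grad2 φ p) (grad2 φ p) * (sig2 p) ^ (-(2 * γ)) ≤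
      2 * γ ^ 2 * (∫ p in Ω, (φ p) ^ 2 * (sig2 p) ^ (-(2 * γ) - 2)) +
        μ ^ 2 * ∫ p in Ω, (φ p) ^ 2 * (sig2 p) ^ (-(2 * γ)) :=
  integrable_and_half_integral_dot2_grad2_mul_sig2_rpow_le (sq_nonneg μ) hγ
    (ae_restrict_of_ae ae_sig2_pos) hφd hφL2 hφgL2 heig h1 h2

/-- For a Neumann eigenfunction φ ∈ H¹(Ω) with eigenvalue μ² > 0 on
the cusp domain Ω, if σ^{-γ-1}φ and σ^{-γ}φ ∈ L²(Ω) for some γ ≥ 0, then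
σ^{-γ}∇φ ∈ L²(Ω), with
(1/2)∫_Ω |∇φ|²σ^{-2γ} ≤ 2γ²∫_Ω φ²σ^{-2γ-2} + μ²∫_Ω φ²σ^{-2γ}. -/
theorem stmt14 (f : ℝ → ℝ) (hf : ∀ t, f t = (t - 1) ^ 2 * (t + 1) ^ 2)
    (Ω : Set (ℝ × ℝ))
    (hΩ : Ω = {p : ℝ × ℝ | -1 < p.1 ∧ p.1 < 1 ∧ -f p.1 < p.2 ∧ p.2 < f p.1})
    (μ γ : ℝ) (hμ : 0 < μ) (hγ : 0 ≤ γ)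
    (φ : ℝ × ℝ → ℝ) (hφd : Differentiable ℝ φ)
    (hφL2 : MemLp φ 2 (volume.restrict Ω))
    (hφgL2 : MemLp (grad2 φ) 2 (volume.restrict Ω))
    (heig : ∀ w : ℝ × ℝ → ℝ, Differentiable ℝ w →
      MemLp w 2 (volume.restrict Ω) → MemLp (grad2 w) 2 (volume.restrict Ω) →
      ∫ p in Ω, dot2 (grad2 φ p) (grad2 w p) = μ ^ 2 * ∫ p in Ω, φ p * w p)
    (h1 : IntegrableOn (fun p => (φ p) ^ 2 * (sig2 p) ^ (-(2 * γ) - 2)) Ω)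
    (h2 : IntegrableOn (fun p => (φ p) ^ 2 * (sig2 p) ^ (-(2 * γ))) Ω) :
    IntegrableOn (fun p => dot2 (grad2 φ p) (grad2 φ p) * (sig2 p) ^ (-(2 * γ))) Ω ∧
    (1 / 2) * ∫ p in Ω, dot2 (grad2 φ p) (grad2 φ p) * (sig2 p) ^ (-(2 * γ)) ≤
      2 * γ ^ 2 * (∫ p in Ω, (φ p) ^ 2 * (sig2 p) ^ (-(2 * γ) - 2)) +
        μ ^ 2 * ∫ p in Ω, (φ p) ^ 2 * (sig2 p) ^ (-(2 * γ)) :=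
  stmt14_general Ω μ γ hγ φ hφd hφL2 hφgL2 heig h1 h2
end
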